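/- Let K≥2 be an integer, M=⌊K/2⌋, μ∈Δ_d, and H∈S^d. If ζ_1,…,ζ_K are i.i.d. with common distribution P_μ, then ln E[exp(Tr(H·ω[ζ^K]))] ≤ Φ_M(H; μμᵀ). -/

import Mathlib

/-!
Hoeffding's decomposition: fix `M` disjoint pairs of sample indices. The U-statistic
`𝔼_{i ≠ j} h(ζ_i, ζ_j)` is the average over all permutations `σ` of the sample of the mean of `h`
over the `M` pairs relabelled by `σ`. Jensen's inequality moves `exp` inside this average, and for
each `σ` the `M` pairs are independent, so the exponential moment factorises into
`(E exp(h(ζ_1, ζ_2) / M))^M`. For `ζ_i ∼ P_μ` and `h(a, b) = Tr(H ω(a, b))` this moment is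
`exp Φ(H / M; μμᵀ)`.
-/

open Matrix MeasureTheory Real

noncomputable section

/-- The discrete distribution `P_μ` on ℝ^d assigning mass `μ i` to the basis vector `e_i`. -/
def discDist {d : ℕ} (μ : Fin d → ℝ) : Measure (Fin d → ℝ) :=
  ∑ i, ENNReal.ofReal (μ i) • Measure.dirac (Pi.single i 1)

/-- `ω_{ij} = (1/2)(ζ_iζ_jᵀ + ζ_jζ_iᵀ)` for two vectors. -/
def omegaPair {d : ℕ} (a b : Fin d → ℝ) : Matrix (Fin d) (Fin d) ℝ :=
  (1/2 : ℝ) • (vecMulVec a b + vecMulVec b a)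

/-- The quadratic lifting `ω[ζ^K] = (2/(K(K−1)))·Σ_{i<j} ω_{ij}[ζ^K]`. -/
def omegaLift {d K : ℕ} (ζ : Fin K → Fin d → ℝ) : Matrix (Fin d) (Fin d) ℝ :=
  (2 / ((K : ℝ) * ((K : ℝ) - 1))) •
    ∑ p ∈ Finset.univ.filter (fun p : Fin K × Fin K => p.1 < p.2),
      omegaPair (ζ p.1) (ζ p.2)

/-- `Φ(H;Z) = ln(Σ_{i,j} Z_{ij} e^{H_{ij}})`. -/
def PhiD {d : ℕ} (H Z : Matrix (Fin d) (Fin d) ℝ) : ℝ :=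
  Real.log (∑ i, ∑ j, Z i j * Real.exp (H i j))

open Finset ProbabilityTheory Measure
open scoped ENNReal BigOperators

/-- `Perm κ` acts 2-transitively on `κ`, so the left side does not depend on the pair `(x, y)`;
averaging it over all ordered pairs of distinct points gives the right side. -/
theorem Equiv.Perm.expect_apply_apply {κ : Type*} [Fintype κ] [DecidableEq κ] {x y : κ}
    (hxy : x ≠ y) (g : κ → κ → ℝ) :
    𝔼 σ : Equiv.Perm κ, g (σ x) (σ y) = 𝔼 q ∈ univ.offDiag, g q.1 q.2 := by
  have h_move : ∀ q ∈ (univ : Finset κ).offDiag,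
      𝔼 σ : Equiv.Perm κ, g (σ x) (σ y) = 𝔼 σ : Equiv.Perm κ, g (σ q.1) (σ q.2) := by
    intro q hq
    obtain ⟨τ, hτx, hτy⟩ := MulAction.is_two_pretransitive_iff.mp
      (Equiv.Perm.isMultiplyPretransitive κ 2) hxy (mem_offDiag.mp hq).2.2
    exact Fintype.expect_equiv (Equiv.mulRight τ⁻¹) _ _ fun σ => by
      simp [← hτx, ← hτy, Equiv.Perm.smul_def]
  have h_offDiag : ∀ σ : Equiv.Perm κ,
      𝔼 q ∈ univ.offDiag, g (σ q.1) (σ q.2) = 𝔼 q ∈ univ.offDiag, g q.1 q.2 := fun σ =>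
    expect_equiv (σ.prodCongr σ) (by simp) (fun _ _ => rfl)
  calc 𝔼 σ : Equiv.Perm κ, g (σ x) (σ y)
      = 𝔼 q ∈ univ.offDiag, 𝔼 σ : Equiv.Perm κ, g (σ q.1) (σ q.2) := by
        rw [expect_congr rfl fun q hq => (h_move q hq).symm,
          expect_const ⟨(x, y), by simpa using hxy⟩]
    _ = 𝔼 q ∈ univ.offDiag, g q.1 q.2 := by
        rw [expect_comm, expect_congr rfl fun σ _ => h_offDiag σ, Fintype.expect_const]

theorem expect_offDiag_eq_of_symm {κ : Type*} [Fintype κ] [LinearOrder κ] {g : κ → κ → ℝ}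
    (hg : ∀ x y, g x y = g y x) :
    𝔼 q ∈ univ.offDiag, g q.1 q.2
      = 2 / ((Fintype.card κ : ℝ) * ((Fintype.card κ : ℝ) - 1)) *
          ∑ q ∈ univ.filter (fun q : κ × κ => q.1 < q.2), g q.1 q.2 := by
  have h_split : (univ : Finset κ).offDiag
      = univ.filter (fun q : κ × κ => q.1 < q.2) ∪ univ.filter (fun q : κ × κ => q.2 < q.1) := by
    ext q; simp [lt_or_lt_iff_ne]
  have h_swap : ∑ q ∈ univ.filter (fun q : κ × κ => q.2 < q.1), g q.1 q.2
      = ∑ q ∈ univ.filter (fun q : κ × κ => q.1 < q.2), g q.1 q.2 :=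
    sum_equiv (Equiv.prodComm κ κ) (by simp) fun q _ => hg _ _
  have h_card : ((univ : Finset κ).offDiag.card : ℝ)
      = (Fintype.card κ : ℝ) * ((Fintype.card κ : ℝ) - 1) := by
    rw [offDiag_card, Nat.cast_sub (Nat.le_mul_self _), card_univ]
    push_cast; ring
  rw [expect_eq_sum_div_card, h_card, h_split,
    sum_union (disjoint_filter.mpr fun q _ h => (lt_asymm h).elim), h_swap]
  ring

theorem ConvexOn.map_expect_le {ι : Type*} {s : Finset ι} {t : Set ℝ} {f : ℝ → ℝ}
    (hf : ConvexOn ℝ t f) (hs : s.Nonempty) {p : ι → ℝ} (hp : ∀ i ∈ s, p i ∈ t) :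
    f (𝔼 i ∈ s, p i) ≤ 𝔼 i ∈ s, f (p i) := by
  have hcard : (0 : ℝ) < #s := by exact_mod_cast hs.card_pos
  simp only [expect_eq_sum_div_card, div_eq_inv_mul, mul_sum]
  simpa [smul_eq_mul] using hf.map_sum_le (t := s) (w := fun _ => (#s : ℝ)⁻¹) (p := p)
    (fun _ _ => by positivity) (by simp [hcard.ne']) hp

theorem lintegral_ofReal_expect_of_forall_eq {α ι : Type*} [MeasurableSpace α] {μ : Measure α}
    {s : Finset ι} (hs : s.Nonempty) {F : ι → α → ℝ} (hF : ∀ i ∈ s, Measurable (F i))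
    (hF0 : ∀ i ∈ s, ∀ x, 0 ≤ F i x) {I : ℝ≥0∞}
    (hI : ∀ i ∈ s, ∫⁻ x, ENNReal.ofReal (F i x) ∂μ = I) :
    ∫⁻ x, ENNReal.ofReal (𝔼 i ∈ s, F i x) ∂μ = I := by
  have h_pt : ∀ x, ENNReal.ofReal (𝔼 i ∈ s, F i x)
      = (#s : ℝ≥0∞)⁻¹ * ∑ i ∈ s, ENNReal.ofReal (F i x) := fun x => by
    rw [expect_eq_sum_div_card, div_eq_inv_mul, ENNReal.ofReal_mul (by positivity),
      ENNReal.ofReal_sum_of_nonneg fun i hi => hF0 i hi x, ENNReal.ofReal_inv_of_pos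
      (by exact_mod_cast hs.card_pos), ENNReal.ofReal_natCast]
  simp_rw [h_pt]
  rw [lintegral_const_mul _ (measurable_sum _ fun i hi => (hF i hi).ennreal_ofReal),
    lintegral_finsetSum _ fun i hi => (hF i hi).ennreal_ofReal, sum_congr rfl hI, sum_const,
    nsmul_eq_mul, ENNReal.inv_mul_cancel_left (by simpa using hs.ne_empty) (by simp)]

theorem lintegral_prod_pairs_eq_pow {Ω ι κ : Type*} [MeasurableSpace Ω] (ν : Measure Ω)
    [IsProbabilityMeasure ν] [Fintype ι] [Fintype κ] {f : ι × Fin 2 → κ}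
    (hf : f.Injective) {G : Ω × Ω → ℝ≥0∞} (hG : Measurable G) :
    ∫⁻ ζ, ∏ i, G (ζ (f (i, 0)), ζ (f (i, 1))) ∂(Measure.pi fun _ : κ => ν)
      = (∫⁻ z, G z ∂(ν.prod ν)) ^ Fintype.card ι := by
  have h_law : (Measure.pi fun _ : κ => ν).map (fun ζ i j => ζ (f (i, j)))
      = infinitePi fun _ : ι => infinitePi fun _ : Fin 2 => ν := by
    have h_restrict := map_infinitePi_infinitePi_of_inj (P := fun _ : κ => ν) hf
    rw [← infinitePi_eq_pi, ← infinitePi_map_curry (fun _ _ => ν), ← h_restrict,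
      Measure.map_map (by fun_prop) (by fun_prop)]
    rfl
  have h_pair : (infinitePi fun _ : Fin 2 => ν).map (fun ω => (ω 0, ω 1)) = ν.prod ν :=
    infinitePi_map_eval_prod (by decide)
  have h_indep : iIndepFun (fun i (ω : ι → Fin 2 → Ω) => G (ω i 0, ω i 1))
      (infinitePi fun _ : ι => infinitePi fun _ : Fin 2 => ν) :=
    iIndepFun_infinitePi (X := fun _ (ω : Fin 2 → Ω) => G (ω 0, ω 1)) fun _ => by fun_prop
  calc ∫⁻ ζ, ∏ i, G (ζ (f (i, 0)), ζ (f (i, 1))) ∂(Measure.pi fun _ : κ => ν)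
      = ∫⁻ ω, ∏ i, G (ω i 0, ω i 1)
          ∂(Measure.pi fun _ : κ => ν).map (fun ζ i j => ζ (f (i, j))) := by
        rw [lintegral_map (by fun_prop) (by fun_prop)]
    _ = ∏ i : ι, ∫⁻ z, G z ∂(ν.prod ν) := by
        rw [h_law, lintegral_prod_eq_prod_lintegral_of_indepFun _ _ h_indep fun _ => by fun_prop]
        refine prod_congr rfl fun i _ => ?_
        have h_eval := lintegral_map (μ := infinitePi fun _ : ι => infinitePi fun _ : Fin 2 => ν)
          (f := fun ω : Fin 2 → Ω => G (ω 0, ω 1)) (g := fun ω => ω i) (by fun_prop) (by fun_prop)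
        rw [infinitePi_map_eval] at h_eval
        rw [← h_eval, ← h_pair, lintegral_map hG (by fun_prop)]
    _ = (∫⁻ z, G z ∂(ν.prod ν)) ^ Fintype.card ι := by rw [prod_const, card_univ]

theorem lintegral_exp_expect_offDiag_le {Ω κ : Type*} [MeasurableSpace Ω] (ν : Measure Ω)
    [IsProbabilityMeasure ν] [Fintype κ] [DecidableEq κ] {h : Ω → Ω → ℝ}
    (hh : Measurable (Function.uncurry h)) {M : ℕ} (hM : 0 < M)
    (hMκ : 2 * M ≤ Fintype.card κ) :
    ∫⁻ ζ, ENNReal.ofReal (exp (𝔼 q ∈ univ.offDiag, h (ζ q.1) (ζ q.2)))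
        ∂(Measure.pi fun _ : κ => ν)
      ≤ (∫⁻ z, ENNReal.ofReal (exp (h z.1 z.2 / M)) ∂(ν.prod ν)) ^ M := by
  obtain ⟨f⟩ := Function.Embedding.nonempty_of_card_le (α := Fin M × Fin 2) (β := κ)
    (by simpa [mul_comm] using hMκ)
  have hf_ne : ∀ m, f (m, 0) ≠ f (m, 1) := fun m => f.injective.ne (by simp)
  have : Nonempty (Fin M) := ⟨⟨0, hM⟩⟩
  set V : Equiv.Perm κ → (κ → Ω) → ℝ :=
    fun σ ζ => 𝔼 m, h (ζ (σ (f (m, 0)))) (ζ (σ (f (m, 1))))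
  have h_hoeffding : ∀ ζ : κ → Ω,
      𝔼 q ∈ univ.offDiag, h (ζ q.1) (ζ q.2) = 𝔼 σ : Equiv.Perm κ, V σ ζ := fun ζ => by
    rw [expect_comm]
    refine (Fintype.expect_const _).symm.trans (expect_congr rfl fun m _ => ?_)
    exact (Equiv.Perm.expect_apply_apply (hf_ne m) fun u v => h (ζ u) (ζ v)).symm
  have h_pairs : ∀ σ : Equiv.Perm κ,
      ∫⁻ ζ, ENNReal.ofReal (exp (V σ ζ)) ∂(Measure.pi fun _ : κ => ν)
      = (∫⁻ z, ENNReal.ofReal (exp (h z.1 z.2 / M)) ∂(ν.prod ν)) ^ M := fun σ => by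
    have h_exp : ∀ ζ : κ → Ω, ENNReal.ofReal (exp (V σ ζ))
        = ∏ m, ENNReal.ofReal (exp (h (ζ (σ (f (m, 0)))) (ζ (σ (f (m, 1)))) / M)) := fun ζ => by
      simp only [V]
      rw [← ENNReal.ofReal_prod_of_nonneg fun _ _ => (exp_pos _).le, ← exp_sum,
        Fintype.expect_eq_sum_div_card, Fintype.card_fin, sum_div]
    simp_rw [h_exp]
    simpa using lintegral_prod_pairs_eq_pow ν (σ.injective.comp f.injective)
      (G := fun z => ENNReal.ofReal (exp (h z.1 z.2 / M))) (by fun_prop)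
  calc ∫⁻ ζ, ENNReal.ofReal (exp (𝔼 q ∈ univ.offDiag, h (ζ q.1) (ζ q.2)))
        ∂(Measure.pi fun _ : κ => ν)
      ≤ ∫⁻ ζ, ENNReal.ofReal (𝔼 σ : Equiv.Perm κ, exp (V σ ζ)) ∂(Measure.pi fun _ : κ => ν) :=
        lintegral_mono fun ζ => ENNReal.ofReal_le_ofReal <| by
          rw [h_hoeffding]
          exact convexOn_exp.map_expect_le univ_nonempty fun _ _ => Set.mem_univ _
    _ = _ := lintegral_ofReal_expect_of_forall_eq univ_nonempty
        (fun σ _ => by simp only [V, Fintype.expect_eq_sum_div_card]; fun_prop)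
        (fun _ _ _ => (exp_pos _).le) fun σ _ => h_pairs σ

theorem lintegral_discDist {d : ℕ} (μ : Fin d → ℝ) (F : (Fin d → ℝ) → ℝ≥0∞) :
    ∫⁻ x, F x ∂discDist μ = ∑ i, ENNReal.ofReal (μ i) * F (Pi.single i 1) := by
  simp [discDist, lintegral_finsetSum_measure, lintegral_smul_measure, lintegral_dirac]

theorem isProbabilityMeasure_discDist {d : ℕ} {μ : Fin d → ℝ} (hμ0 : ∀ i, 0 ≤ μ i)
    (hμ1 : ∑ i, μ i = 1) : IsProbabilityMeasure (discDist μ) := by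
  constructor
  rw [← lintegral_one, lintegral_discDist]
  simp [← ENNReal.ofReal_sum_of_nonneg fun i _ => hμ0 i, hμ1]

theorem omegaPair_comm {d : ℕ} (a b : Fin d → ℝ) : omegaPair a b = omegaPair b a := by
  rw [omegaPair, omegaPair, add_comm]

theorem trace_mul_omegaPair_single {d : ℕ} {H : Matrix (Fin d) (Fin d) ℝ} (hH : H.IsSymm)
    (i j : Fin d) : (H * omegaPair (Pi.single i 1) (Pi.single j 1)).trace = H i j := by
  simp [omegaPair, Matrix.mul_add, Matrix.trace_add, Matrix.mul_vecMulVec, Matrix.trace_vecMulVec,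
    hH.apply i j]
  ring

theorem trace_mul_omegaLift {d K : ℕ} (H : Matrix (Fin d) (Fin d) ℝ) (ζ : Fin K → Fin d → ℝ) :
    (H * omegaLift ζ).trace = 𝔼 q ∈ univ.offDiag, (H * omegaPair (ζ q.1) (ζ q.2)).trace := by
  rw [expect_offDiag_eq_of_symm (g := fun a b => (H * omegaPair (ζ a) (ζ b)).trace)
    fun x y => by rw [omegaPair_comm], Fintype.card_fin]
  simp [omegaLift, Matrix.mul_sum, trace_sum]

theorem lintegral_exp_trace_mul_omegaPair {d : ℕ} {μ : Fin d → ℝ} (hμ0 : ∀ i, 0 ≤ μ i)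
    (hμ1 : ∑ i, μ i = 1) {H : Matrix (Fin d) (Fin d) ℝ} (hH : H.IsSymm) :
    ∫⁻ z, ENNReal.ofReal (exp ((H * omegaPair z.1 z.2).trace)) ∂(discDist μ).prod (discDist μ)
      = ENNReal.ofReal (exp (PhiD H (vecMulVec μ μ))) := by
  have h_term : ∀ i j, 0 ≤ vecMulVec μ μ i j * exp (H i j) := fun i j => by
    rw [vecMulVec_apply]; have := hμ0 i; have := hμ0 j; positivity
  obtain ⟨i₀, hi₀⟩ : ∃ i, 0 < μ i := by
    by_contra! h
    linarith [sum_nonpos fun i (_ : i ∈ univ) => h i]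
  have h_pos : 0 < ∑ i, ∑ j, vecMulVec μ μ i j * exp (H i j) :=
    sum_pos' (fun i _ => sum_nonneg fun j _ => h_term i j) ⟨i₀, mem_univ _,
      sum_pos' (fun j _ => h_term i₀ j) ⟨i₀, mem_univ _, by rw [vecMulVec_apply]; positivity⟩⟩
  have := isProbabilityMeasure_discDist hμ0 hμ1
  have h_cont : Continuous fun z : (Fin d → ℝ) × (Fin d → ℝ) =>
      exp ((H * omegaPair z.1 z.2).trace) := by
    unfold omegaPair; fun_prop
  rw [lintegral_prod _ h_cont.measurable.ennreal_ofReal.aemeasurable, PhiD, exp_log h_pos,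
    ENNReal.ofReal_sum_of_nonneg fun i _ => sum_nonneg fun j _ => h_term i j]
  simp only [lintegral_discDist, trace_mul_omegaPair_single hH]
  refine sum_congr rfl fun i _ => ?_
  rw [ENNReal.ofReal_sum_of_nonneg fun j _ => h_term i j, mul_sum]
  refine sum_congr rfl fun j _ => ?_
  rw [vecMulVec_apply, ENNReal.ofReal_mul (mul_nonneg (hμ0 i) (hμ0 j)),
    ENNReal.ofReal_mul (hμ0 i), mul_assoc]

/-- for i.i.d. `ζ_1,…,ζ_K ∼ P_μ` and symmetric `H`,
`ln E[exp(Tr(H·ω[ζ^K]))] ≤ Φ_M(H; μμᵀ)` with `M = ⌊K/2⌋`. -/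
theorem statement8 {d K : ℕ} (hK : 2 ≤ K) (μ : Fin d → ℝ)
    (hμ0 : ∀ i, 0 ≤ μ i) (hμ1 : ∑ i, μ i = 1)
    (H : Matrix (Fin d) (Fin d) ℝ) (hHsym : H.IsSymm) :
    ∫⁻ ζ, ENNReal.ofReal (Real.exp ((H * omegaLift ζ).trace))
        ∂(Measure.pi fun _ : Fin K => discDist μ)
      ≤ ENNReal.ofReal (Real.exp (((K / 2 : ℕ) : ℝ) *
          PhiD ((((K / 2 : ℕ) : ℝ))⁻¹ • H) (vecMulVec μ μ))) := by
  have := isProbabilityMeasure_discDist hμ0 hμ1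
  have h_meas : Measurable (Function.uncurry fun a b : Fin d → ℝ => (H * omegaPair a b).trace) :=
    Continuous.measurable <| by unfold omegaPair; fun_prop
  have h_scale : ∀ a b : Fin d → ℝ, (H * omegaPair a b).trace / ((K / 2 : ℕ) : ℝ)
      = ((((K / 2 : ℕ) : ℝ))⁻¹ • H * omegaPair a b).trace := fun a b => by
    rw [Matrix.smul_mul, trace_smul, smul_eq_mul, inv_mul_eq_div]
  calc ∫⁻ ζ, ENNReal.ofReal (exp ((H * omegaLift ζ).trace))
        ∂(Measure.pi fun _ : Fin K => discDist μ)
      = ∫⁻ ζ, ENNReal.ofReal (exp (𝔼 q ∈ univ.offDiag, (H * omegaPair (ζ q.1) (ζ q.2)).trace))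
          ∂(Measure.pi fun _ : Fin K => discDist μ) := by simp_rw [trace_mul_omegaLift]
    _ ≤ (∫⁻ z, ENNReal.ofReal (exp ((H * omegaPair z.1 z.2).trace / ((K / 2 : ℕ) : ℝ)))
          ∂(discDist μ).prod (discDist μ)) ^ (K / 2) :=
        lintegral_exp_expect_offDiag_le _ h_meas (by omega) (by simp; omega)
    _ = _ := by
        simp_rw [h_scale]
        rw [lintegral_exp_trace_mul_omegaPair hμ0 hμ1 (hHsym.smul _), ← ENNReal.ofReal_pow
          (exp_pos _).le, ← exp_nat_mul]

end
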